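/- Let U₁ = (M₁, 𝓕₁) and U₂ = (M₂, 𝓕₂) be complete deterministic Muller acceptors over the same finite alphabet with finite state sets. Then ⟦U₁⟧ ⊆ ⟦U₂⟧ if and only if for every reachable SCC C of the product automaton M₁ × M₂, π₁(C) ∈ 𝓕₁ implies π₂(C) ∈ 𝓕₂. Moreover, if ⟦U₁⟧ is not a subset of ⟦U₂⟧, then there exist u ∈ Σ* and v ∈ Σ⁺ such that the ultimately periodic ω-word u(v)^ω is in ⟦U₁⟧ \ ⟦U₂⟧. -/

import Mathlib

open Filter

/-- Extended transition function: `dstar δ q x` is the state reached from `q` reading `x`. -/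
def dstar {Q A : Type*} (δ : Q → A → Q) (q : Q) (x : List A) : Q := x.foldl δ q

/-- The run of a deterministic automaton on an ω-word from state `q`. -/
def run {Q A : Type*} (δ : Q → A → Q) (q : Q) (w : ℕ → A) : ℕ → Q
  | 0 => q
  | n + 1 => δ (run δ q w n) (w n)

/-- The set of states visited infinitely often by the run on `w` from `q`. -/
def infOcc {Q A : Type*} (δ : Q → A → Q) (q : Q) (w : ℕ → A) : Set Q :=
  {p | ∃ᶠ n in atTop, run δ q w n = p}

/-- `C` is a strongly connected component of the automaton with transitions `δ`. -/
def IsSCC {Q A : Type*} (δ : Q → A → Q) (C : Set Q) : Prop :=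
  C.Nonempty ∧ ∀ q₁ ∈ C, ∀ q₂ ∈ C, ∃ x : List A, x ≠ [] ∧ dstar δ q₁ x = q₂ ∧
    ∀ x', x' <+: x → dstar δ q₁ x' ∈ C

/-- `q` is reachable from the initial state `qι`. -/
def Reachable {Q A : Type*} (δ : Q → A → Q) (qι q : Q) : Prop :=
  ∃ x : List A, dstar δ qι x = q

/-- The ultimately periodic ω-word `u(v)^ω`. -/
def upWord {A : Type*} (u v : List A) (hv : v ≠ []) : ℕ → A := fun n =>
  if h : n < u.length then u[n]
  else v[(n - u.length) % v.length]'(Nat.mod_lt _ (List.length_pos_iff.mpr hv))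

/-- The transition function of the product automaton. -/
def prodStep {Q₁ Q₂ A : Type*} (δ₁ : Q₁ → A → Q₁) (δ₂ : Q₂ → A → Q₂) :
    Q₁ × Q₂ → A → Q₁ × Q₂ := fun p a => (δ₁ p.1 a, δ₂ p.2 a)

/-- The ω-word `x·z` obtained by prepending the finite word `x` to `z`. -/
def prepend {A : Type*} (x : List A) (z : ℕ → A) : ℕ → A := fun n =>
  if h : n < x.length then x[n] else z (n - x.length)

/-!
A run of a finite automaton eventually stays inside the set of states it visits infinitely often,
and that set is a reachable SCC. Conversely, a reachable SCC `C` is exactly the set of states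
visited infinitely often on the ultimately periodic word `u(v)^ω`, where `u` leads into `C` and
`v` is a cycle inside `C` through all of its states. Since the run of `M₁ × M₂` projects onto the
runs of `M₁` and `M₂`, whether a word is accepted by either acceptor depends only on the SCC of
the product that its run ends up in.
-/

section FrequentValues

variable {ι α β : Type*} [Finite α] (l : Filter ι) (s : ι → α)

theorem eventually_mem_setOf_frequently_eq :
    ∀ᶠ i in l, s i ∈ {a | ∃ᶠ j in l, s j = a} := by
  by_contra h
  obtain ⟨a, ha⟩ := frequently_exists.1
    ((not_eventually.1 h).mono fun i hi => ⟨s i, hi, rfl⟩ :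
      ∃ᶠ i in l, ∃ a, a ∉ {a | ∃ᶠ j in l, s j = a} ∧ s i = a)
  obtain ⟨-, ha', -⟩ := ha.exists
  exact ha' (ha.mono fun _ => And.right)

theorem setOf_frequently_eq_nonempty [l.NeBot] : {a | ∃ᶠ i in l, s i = a}.Nonempty :=
  let ⟨i, hi⟩ := (eventually_mem_setOf_frequently_eq l s).exists
  ⟨s i, hi⟩

theorem image_setOf_frequently_eq (f : α → β) :
    f '' {a | ∃ᶠ i in l, s i = a} = {b | ∃ᶠ i in l, f (s i) = b} := by
  ext b
  refine ⟨?_, fun hb => ?_⟩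
  · rintro ⟨a, ha, rfl⟩
    exact ha.mono fun i hi => congrArg f hi
  · obtain ⟨a, ha⟩ := frequently_exists.1
      (hb.mono fun i hi => ⟨s i, rfl, hi⟩ : ∃ᶠ i in l, ∃ a, s i = a ∧ f a = b)
    obtain ⟨-, -, rfl⟩ := ha.exists
    exact ⟨a, ha.mono fun _ => And.left, rfl⟩

end FrequentValues

section Automaton

variable {Q A : Type*} (δ : Q → A → Q)

theorem dstar_append (q : Q) (x y : List A) :
    dstar δ q (x ++ y) = dstar δ (dstar δ q x) y :=
  List.foldl_append

theorem run_eq_dstar (q : Q) (w : ℕ → A) (n : ℕ) :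
    run δ q w n = dstar δ q ((List.range n).map w) := by
  induction n with
  | zero => rfl
  | succ n ih => rw [List.range_succ, List.map_append, dstar_append, ← ih]; rfl

theorem run_add (q : Q) (w : ℕ → A) (m k : ℕ) :
    run δ q w (m + k) = dstar δ (run δ q w m) ((List.range k).map fun i => w (m + i)) := by
  rw [run_eq_dstar, run_eq_dstar, List.range_add, List.map_append, dstar_append, List.map_map]
  rfl

theorem reachable_of_mem_infOcc {q p : Q} {w : ℕ → A} (hp : p ∈ infOcc δ q w) :
    Reachable δ q p :=
  let ⟨n, hn⟩ := hp.exists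
  ⟨_, (run_eq_dstar δ q w n).symm.trans hn⟩

theorem isSCC_infOcc [Finite Q] (q : Q) (w : ℕ → A) : IsSCC δ (infOcc δ q w) := by
  refine ⟨setOf_frequently_eq_nonempty atTop _, fun p₁ hp₁ p₂ hp₂ => ?_⟩
  obtain ⟨N, hN⟩ := eventually_atTop.1 (eventually_mem_setOf_frequently_eq atTop (run δ q w))
  obtain ⟨m, hmN, rfl⟩ := frequently_atTop.1 hp₁ N
  obtain ⟨n, hmn, rfl⟩ := frequently_atTop.1 hp₂ (m + 1)
  refine ⟨(List.range (n - m)).map fun i => w (m + i), by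
    simp only [ne_eq, List.map_eq_nil_iff, List.range_eq_nil]; omega, ?_, fun x hx => ?_⟩
  · rw [← run_add, Nat.add_sub_cancel' (by omega)]
  · rw [List.prefix_iff_eq_take.1 hx, ← List.map_take, List.take_range, ← run_add]
    exact hN _ (by omega)

def visited (q : Q) (x : List A) : Set Q :=
  Set.range fun j => dstar δ q (x.take j)

theorem dstar_mem_visited (q : Q) (x : List A) : dstar δ q x ∈ visited δ q x :=
  ⟨x.length, congrArg (dstar δ q) x.take_length⟩

theorem visited_append (q : Q) (x y : List A) :
    visited δ q (x ++ y) = visited δ q x ∪ visited δ (dstar δ q x) y := by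
  apply Set.Subset.antisymm
  · rintro _ ⟨j, rfl⟩
    simp only [List.take_append, dstar_append]
    rcases le_or_gt j x.length with hj | hj
    · exact .inl ⟨j, by rw [Nat.sub_eq_zero_of_le hj, List.take_zero]; rfl⟩
    · exact .inr ⟨j - x.length, by rw [List.take_of_length_le hj.le]⟩
  · rintro _ (⟨j, rfl⟩ | ⟨k, rfl⟩)
    · exact ⟨min j x.length, by simp [List.take_append, ← List.take_eq_take_min]⟩
    · exact ⟨x.length + k, by simp [List.take_append, dstar_append, List.take_of_length_le]⟩

theorem IsSCC.exists_path {C : Set Q} (hC : IsSCC δ C) {d e : Q} (hd : d ∈ C) (he : e ∈ C) :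
    ∃ x, x ≠ [] ∧ dstar δ d x = e ∧ visited δ d x ⊆ C := by
  obtain ⟨x, hx, hxe, hpre⟩ := hC.2 d hd e he
  exact ⟨x, hx, hxe, Set.range_subset_iff.2 fun j => hpre _ (List.take_prefix j x)⟩

theorem IsSCC.exists_path_covering {C : Set Q} (hC : IsSCC δ C) {c : Q} (hc : c ∈ C)
    (s : Finset Q) (hs : ↑s ⊆ C) {d : Q} (hd : d ∈ C) :
    ∃ x, x ≠ [] ∧ dstar δ d x = c ∧ ↑s ⊆ visited δ d x ∧ visited δ d x ⊆ C := by
  classical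
  induction s using Finset.induction_on generalizing d with
  | empty =>
    obtain ⟨x, hx, hxc, hxC⟩ := hC.exists_path δ hd hc
    exact ⟨x, hx, hxc, by simp, hxC⟩
  | insert a s _ ih =>
    rw [Finset.coe_insert, Set.insert_subset_iff] at hs
    obtain ⟨x, -, rfl, hxC⟩ := hC.exists_path δ hd hs.1
    obtain ⟨y, hy, hyc, hsy, hyC⟩ := ih hs.2 hs.1
    refine ⟨x ++ y, by simp [hy], by rw [dstar_append, hyc], ?_, ?_⟩
    · rw [Finset.coe_insert, visited_append]
      exact Set.insert_subset (.inl (dstar_mem_visited δ d x)) (hsy.trans Set.subset_union_right)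
    · rw [visited_append]
      exact Set.union_subset hxC hyC

theorem IsSCC.exists_cycle_visited_eq [Finite Q] {C : Set Q} (hC : IsSCC δ C) {c : Q}
    (hc : c ∈ C) : ∃ v, v ≠ [] ∧ dstar δ c v = c ∧ visited δ c v = C := by
  obtain ⟨s, rfl⟩ := (Set.toFinite C).exists_finset_coe
  obtain ⟨v, hv, hvc, hsv, hvs⟩ := hC.exists_path_covering δ hc s subset_rfl hc
  exact ⟨v, hv, hvc, hvs.antisymm hsv⟩

end Automaton

section UpWord

variable {A : Type*} (u v : List A) (hv : v ≠ [])

theorem map_range_upWord : (List.range u.length).map (upWord u v hv) = u :=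
  List.ext_getElem (by simp) fun i _ hi => by simp [upWord, hi]

theorem map_range_upWord_period (m : ℕ) {j : ℕ} (hj : j ≤ v.length) :
    (List.range j).map (fun i => upWord u v hv (u.length + m * v.length + i)) = v.take j := by
  refine List.ext_getElem (by simpa using hj) fun i hi _ => ?_
  rw [List.length_map, List.length_range] at hi
  simp [upWord, Nat.add_assoc, Nat.mul_comm m, Nat.mod_eq_of_lt (show i < v.length by omega)]

variable {Q : Type*} (δ : Q → A → Q) {q c : Q}

theorem run_upWord (hu : dstar δ q u = c) (hc : dstar δ c v = c) (m : ℕ) {j : ℕ}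
    (hj : j ≤ v.length) :
    run δ q (upWord u v hv) (u.length + m * v.length + j) = dstar δ c (v.take j) := by
  have hstart : ∀ m, run δ q (upWord u v hv) (u.length + m * v.length) = c := by
    intro m
    induction m with
    | zero => rw [zero_mul, add_zero, run_eq_dstar, map_range_upWord, hu]
    | succ m ih =>
      rw [add_mul, one_mul, ← add_assoc, run_add, ih, map_range_upWord_period u v hv m le_rfl,
        List.take_length, hc]
  rw [run_add, hstart, map_range_upWord_period u v hv m hj]

theorem infOcc_upWord (hu : dstar δ q u = c) (hc : dstar δ c v = c) :
    infOcc δ q (upWord u v hv) = visited δ c v := by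
  have hlen : 0 < v.length := List.length_pos_iff.2 hv
  ext p
  constructor
  · intro hp
    obtain ⟨n, hn, rfl⟩ := frequently_atTop.1 hp u.length
    refine ⟨(n - u.length) % v.length, show dstar δ c (v.take _) = _ from ?_⟩
    rw [← run_upWord u v hv δ hu hc ((n - u.length) / v.length) (Nat.mod_lt _ hlen).le]
    have := Nat.div_add_mod' (n - u.length) v.length
    congr 1
    omega
  · rintro ⟨j, rfl⟩
    refine frequently_atTop.2 fun b => ⟨u.length + b * v.length + min j v.length, ?_, ?_⟩
    · have := Nat.le_mul_of_pos_right b hlen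
      omega
    · rw [run_upWord u v hv δ hu hc b (min_le_right _ _)]
      rw [← List.take_eq_take_min]

end UpWord

theorem IsSCC.exists_upWord_infOcc_eq {Q A : Type*} [Finite Q] {δ : Q → A → Q} {C : Set Q}
    (hC : IsSCC δ C) {q c : Q} (hc : c ∈ C) (hreach : Reachable δ q c) :
    ∃ (u v : List A) (hv : v ≠ []), infOcc δ q (upWord u v hv) = C := by
  obtain ⟨u, hu⟩ := hreach
  obtain ⟨v, hv, hvc, hvC⟩ := hC.exists_cycle_visited_eq δ hc
  exact ⟨u, v, hv, (infOcc_upWord u v hv δ hu hvc).trans hvC⟩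

section Product

variable {A Q₁ Q₂ : Type*} (δ₁ : Q₁ → A → Q₁) (δ₂ : Q₂ → A → Q₂) (q₁ : Q₁) (q₂ : Q₂)

theorem run_prodStep (w : ℕ → A) (n : ℕ) :
    run (prodStep δ₁ δ₂) (q₁, q₂) w n = (run δ₁ q₁ w n, run δ₂ q₂ w n) := by
  induction n with
  | zero => rfl
  | succ n ih => simp only [run, ih, prodStep]

variable [Finite Q₁] [Finite Q₂]

theorem fst_image_infOcc_prodStep (w : ℕ → A) :
    Prod.fst '' infOcc (prodStep δ₁ δ₂) (q₁, q₂) w = infOcc δ₁ q₁ w := by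
  simp only [infOcc, image_setOf_frequently_eq, run_prodStep]

theorem snd_image_infOcc_prodStep (w : ℕ → A) :
    Prod.snd '' infOcc (prodStep δ₁ δ₂) (q₁, q₂) w = infOcc δ₂ q₂ w := by
  simp only [infOcc, image_setOf_frequently_eq, run_prodStep]

theorem exists_upWord_infOcc_eq_image {C : Set (Q₁ × Q₂)} (hC : IsSCC (prodStep δ₁ δ₂) C)
    {c : Q₁ × Q₂} (hc : c ∈ C) (hreach : Reachable (prodStep δ₁ δ₂) (q₁, q₂) c) :
    ∃ (u v : List A) (hv : v ≠ []),
      infOcc δ₁ q₁ (upWord u v hv) = Prod.fst '' C ∧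
      infOcc δ₂ q₂ (upWord u v hv) = Prod.snd '' C := by
  obtain ⟨u, v, hv, huv⟩ := hC.exists_upWord_infOcc_eq hc hreach
  exact ⟨u, v, hv, by rw [← huv, fst_image_infOcc_prodStep],
    by rw [← huv, snd_image_infOcc_prodStep]⟩

theorem setOf_infOcc_mem_subset_iff (𝓕₁ : Set (Set Q₁)) (𝓕₂ : Set (Set Q₂)) :
    {w : ℕ → A | infOcc δ₁ q₁ w ∈ 𝓕₁} ⊆ {w | infOcc δ₂ q₂ w ∈ 𝓕₂} ↔
      ∀ C : Set (Q₁ × Q₂), IsSCC (prodStep δ₁ δ₂) C →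
        (∀ p ∈ C, Reachable (prodStep δ₁ δ₂) (q₁, q₂) p) →
        Prod.fst '' C ∈ 𝓕₁ → Prod.snd '' C ∈ 𝓕₂ := by
  refine ⟨fun h C hC hreach h₁ => ?_, fun h w hw => ?_⟩
  · obtain ⟨c, hc⟩ := hC.1
    obtain ⟨u, v, hv, e₁, e₂⟩ := exists_upWord_infOcc_eq_image δ₁ δ₂ q₁ q₂ hC hc (hreach c hc)
    exact e₂ ▸ h (show infOcc δ₁ q₁ (upWord u v hv) ∈ 𝓕₁ from e₁ ▸ h₁)
  · have h₂ := h _ (isSCC_infOcc _ _ w) (fun _ => reachable_of_mem_infOcc _)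
      ((fst_image_infOcc_prodStep δ₁ δ₂ q₁ q₂ w).symm ▸ hw)
    rwa [snd_image_infOcc_prodStep] at h₂

end Product

theorem stmt13_general {A Q₁ Q₂ : Type*} [Fintype Q₁] [Fintype Q₂]
    (δ₁ : Q₁ → A → Q₁) (q₁ : Q₁) (𝓕₁ : Set (Set Q₁))
    (δ₂ : Q₂ → A → Q₂) (q₂ : Q₂) (𝓕₂ : Set (Set Q₂)) :
    ({w : ℕ → A | infOcc δ₁ q₁ w ∈ 𝓕₁} ⊆ {w | infOcc δ₂ q₂ w ∈ 𝓕₂} ↔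
      ∀ C : Set (Q₁ × Q₂), IsSCC (prodStep δ₁ δ₂) C →
        (∀ p ∈ C, Reachable (prodStep δ₁ δ₂) (q₁, q₂) p) →
        Prod.fst '' C ∈ 𝓕₁ → Prod.snd '' C ∈ 𝓕₂) ∧
    (¬ ({w : ℕ → A | infOcc δ₁ q₁ w ∈ 𝓕₁} ⊆ {w | infOcc δ₂ q₂ w ∈ 𝓕₂}) →
      ∃ (u v : List A) (hv : v ≠ []),
        infOcc δ₁ q₁ (upWord u v hv) ∈ 𝓕₁ ∧ infOcc δ₂ q₂ (upWord u v hv) ∉ 𝓕₂) := by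
  refine ⟨setOf_infOcc_mem_subset_iff δ₁ δ₂ q₁ q₂ 𝓕₁ 𝓕₂, fun hnot => ?_⟩
  rw [setOf_infOcc_mem_subset_iff] at hnot
  push Not at hnot
  obtain ⟨C, hC, hreach, h₁, h₂⟩ := hnot
  obtain ⟨c, hc⟩ := hC.1
  obtain ⟨u, v, hv, e₁, e₂⟩ := exists_upWord_infOcc_eq_image δ₁ δ₂ q₁ q₂ hC hc (hreach c hc)
  exact ⟨u, v, hv, e₁ ▸ h₁, e₂ ▸ h₂⟩

/-- Inclusion of DMAs holds iff for every reachable SCC `C` of the product, `π₁ C ∈ 𝓕₁`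
implies `π₂ C ∈ 𝓕₂`; non-inclusion is witnessed by an ultimately periodic word. -/
theorem stmt13 {A Q₁ Q₂ : Type*} [Fintype A] [Fintype Q₁] [Fintype Q₂]
    (δ₁ : Q₁ → A → Q₁) (q₁ : Q₁) (𝓕₁ : Set (Set Q₁))
    (δ₂ : Q₂ → A → Q₂) (q₂ : Q₂) (𝓕₂ : Set (Set Q₂)) :
    ({w : ℕ → A | infOcc δ₁ q₁ w ∈ 𝓕₁} ⊆ {w | infOcc δ₂ q₂ w ∈ 𝓕₂} ↔
      ∀ C : Set (Q₁ × Q₂), IsSCC (prodStep δ₁ δ₂) C →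
        (∀ p ∈ C, Reachable (prodStep δ₁ δ₂) (q₁, q₂) p) →
        Prod.fst '' C ∈ 𝓕₁ → Prod.snd '' C ∈ 𝓕₂) ∧
    (¬ ({w : ℕ → A | infOcc δ₁ q₁ w ∈ 𝓕₁} ⊆ {w | infOcc δ₂ q₂ w ∈ 𝓕₂}) →
      ∃ (u v : List A) (hv : v ≠ []),
        infOcc δ₁ q₁ (upWord u v hv) ∈ 𝓕₁ ∧ infOcc δ₂ q₂ (upWord u v hv) ∉ 𝓕₂) :=
  stmt13_general δ₁ q₁ 𝓕₁ δ₂ q₂ 𝓕₂
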